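/- Let Ω ⊆ ℝⁿ be a convex bounded open set with smooth boundary and outward unit normal ν, and let u be a classical solution of the graphical mean curvature flow with transport term and Neumann boundary condition, with v := √(1+|du|²) of class C¹ up to ∂Ω. Then for every t > 0 and every x ∈ ∂Ω: (D_{Γ_t}v·ν⃗)(x,t) ≤ 0, where ν⃗ := (ν,0); equivalently, since du·ν = 0 on ∂Ω, dv(x,t)·ν(x) ≤ 0 on ∂Ω. -/

import Mathlib

open MeasureTheory Metric Set Real Filter
open scoped RealInnerProductSpace ENNReal NNReal Topology ContDiff

noncomputable section

abbrev Eucl (n : ℕ) := EuclideanSpace ℝ (Fin n)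

variable {n : ℕ}

/-- spatial gradient of a time-dependent function -/
def sgrad (u : Eucl n → ℝ → ℝ) (x : Eucl n) (t : ℝ) : Eucl n :=
  gradient (fun y => u y t) x

/-- the area element `v = √(1+|du|²)` -/
def vel (u : Eucl n → ℝ → ℝ) (x : Eucl n) (t : ℝ) : ℝ :=
  Real.sqrt (1 + ‖sgrad u x t‖ ^ 2)

/-- divergence of a vector field on `ℝⁿ` -/
def divg (F : Eucl n → Eucl n) (x : Eucl n) : ℝ :=
  ∑ i, fderiv ℝ (fun y => F y i) x (EuclideanSpace.single i 1)

/-- the upward unit normal `(−du,1)/v` of the graph, as a vector in `ℝ^{n+1}` -/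
def unormal (u : Eucl n → ℝ → ℝ) (x : Eucl n) (t : ℝ) : Eucl (n + 1) :=
  (WithLp.equiv 2 (Fin (n + 1) → ℝ)).symm
    (Fin.snoc (fun i => -(sgrad u x t i) / vel u x t) (1 / vel u x t))

/-- the point `(x, u(x,t))` on the graph `Γ_t ⊆ ℝ^{n+1}` -/
def gpt (u : Eucl n → ℝ → ℝ) (x : Eucl n) (t : ℝ) : Eucl (n + 1) :=
  (WithLp.equiv 2 (Fin (n + 1) → ℝ)).symm (Fin.snoc (fun i => x i) (u x t))

/-- `f⃗ · n⃗` evaluated at `(x, u(x,t), t)` -/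
def fdotn (f : Eucl n → ℝ → ℝ → Eucl (n + 1)) (u : Eucl n → ℝ → ℝ)
    (x : Eucl n) (t : ℝ) : ℝ :=
  ⟪f x (u x t) t, unormal u x t⟫

/-- signed distance to `∂Ω` (negative inside `Ω`) -/
def sdist (Ω : Set (Eucl n)) (y : Eucl n) : ℝ := infDist y Ω - infDist y Ωᶜ

/-- the outward unit normal of `∂Ω`, as the gradient of the signed distance -/
def outNormal (Ω : Set (Eucl n)) (x : Eucl n) : Eucl n := gradient (sdist Ω) x

/-- `∂Ω` is smooth: the signed distance is smooth near the boundary. -/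
def SmoothBoundary (Ω : Set (Eucl n)) : Prop :=
  ∃ U : Set (Eucl n), IsOpen U ∧ frontier Ω ⊆ U ∧ ContDiffOn ℝ ∞ (sdist Ω) U

/-- classical solution of graphical MCF with transport term and Neumann condition -/
structure IsMCFSolution (Ω : Set (Eucl n)) (f : Eucl n → ℝ → ℝ → Eucl (n + 1))
    (u₀ : Eucl n → ℝ) (u : Eucl n → ℝ → ℝ) (T : ℝ) : Prop where
  reg_x : ∀ t ∈ Ioo (0 : ℝ) T, ContDiffOn ℝ 2 (fun x => u x t) Ω
  reg_t : ∀ x ∈ Ω, ∀ t ∈ Ioo (0 : ℝ) T, DifferentiableAt ℝ (u x) t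
  cont : ContinuousOn (fun p : Eucl n × ℝ => u p.1 p.2) (closure Ω ×ˢ Icc 0 T)
  grad_cont : ∀ t ∈ Ioo (0 : ℝ) T, ContinuousOn (fun x => sgrad u x t) (closure Ω)
  pde : ∀ x ∈ Ω, ∀ t ∈ Ioo (0 : ℝ) T,
    deriv (u x) t / vel u x t
      = divg (fun y => (vel u y t)⁻¹ • sgrad u y t) x + fdotn f u x t
  neumann : ∀ t ∈ Ioo (0 : ℝ) T, ∀ x ∈ frontier Ω, ⟪sgrad u x t, outNormal Ω x⟫ = 0
  init : ∀ x ∈ closure Ω, u x 0 = u₀ x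

/-- mixed norm `‖f⃗‖_{L^q_t L^p_x (a,b,Γ_t)}`, with the graph integral
`∫_{Γ_t} g dH^n = ∫_Ω g(x,u(x,t)) v dx`, as an extended real number -/
def mixedNormE (Ω : Set (Eucl n)) (f : Eucl n → ℝ → ℝ → Eucl (n + 1))
    (u : Eucl n → ℝ → ℝ) (p q a b : ℝ) : ℝ≥0∞ :=
  (∫⁻ t in Ioo a b,
      (∫⁻ x in Ω, (‖f x (u x t) t‖₊ : ℝ≥0∞) ^ p * ENNReal.ofReal (vel u x t)) ^ (q / p))
    ^ (1 / q)

/-!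
Since `v = √(1 + |du|²)`, `dv = D²u(du)/v`, so on `∂Ω` one needs `⟪D²u(du), ν⟫ ≤ 0`; the
tangential part of `D_Γ v·ν⃗` drops out by the Neumann condition. The vector `τ = du(x)` is
tangent to `∂Ω`, and differentiating `⟪du, ν⟫ = 0` along a boundary curve with velocity `τ` gives
`⟪D²u τ, ν⟫ = -⟪Dν τ, τ⟫`. For convex `Ω` the second fundamental form `⟪Dν τ, τ⟫` is nonnegative:
the signed distance vanishes at `x`, is nonnegative on the supporting hyperplane at `x` (which
lies outside `Ω`), and that hyperplane is orthogonal to `ν`, so the signed distance has a minimum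
at `x` along the tangent line `x + ℝτ`.
-/

theorem IsLocalMin.deriv_deriv_nonneg {φ : ℝ → ℝ} {a : ℝ} (hmin : IsLocalMin φ a)
    (hc : ContinuousAt φ a) : 0 ≤ deriv (deriv φ) a := by
  by_contra! hneg
  have hmax : IsLocalMax φ a := isLocalMax_of_deriv_deriv_neg hneg hmin.deriv_eq_zero hc
  have hconst : φ =ᶠ[𝓝 a] fun _ => φ a := by
    filter_upwards [hmin, hmax] with s h₁ h₂ using le_antisymm h₂ h₁
  rw [hconst.deriv.deriv_eq, deriv_const', deriv_const] at hneg
  exact lt_irrefl _ hneg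

section NormedSpace

variable {E F : Type*} [NormedAddCommGroup E] [NormedSpace ℝ E]
  [NormedAddCommGroup F] [NormedSpace ℝ F]

theorem HasStrictFDerivAt.exists_curve_mem_fiber [CompleteSpace E] [FiniteDimensional ℝ F]
    {d : E → F} {d' : E →L[ℝ] F} {x τ : E} (hd : HasStrictFDerivAt d d' x)
    (hsurj : d'.range = ⊤) (hτ : d' τ = 0) :
    ∃ γ : ℝ → E, γ 0 = x ∧ HasDerivAt γ τ 0 ∧ ∀ᶠ r in 𝓝 0, d (γ r) = d x := by
  let τ' : d'.ker := ⟨τ, hτ⟩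
  have hline : HasDerivAt (fun r : ℝ => r • τ') τ' 0 := by
    simpa using (hasDerivAt_id (0 : ℝ)).smul_const τ'
  refine ⟨fun r => hd.implicitFunction d d' hsurj (d x) (r • τ'), by simp, ?_, ?_⟩
  · exact (hd.to_implicitFunction hsurj).hasFDerivAt.comp_hasDerivAt_of_eq (0 : ℝ) hline
      (by simp)
  · have hlim : Tendsto (fun r : ℝ => (d x, r • τ')) (𝓝 0) (𝓝 (d x, 0)) :=
      tendsto_const_nhds.prodMk_nhds (by simpa using hline.continuousAt.tendsto)
    exact hlim.eventually (hd.map_implicitFunction_eq hsurj)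

theorem Convex.uniqueDiffOn_closure {s : Set E} (hconv : Convex ℝ s) (hs : IsOpen s) :
    UniqueDiffOn ℝ (closure s) := fun x hx =>
  (uniqueDiffWithinAt_convex hconv
    (by rw [hs.interior_eq, ← closure_nonempty_iff]; exact ⟨x, hx⟩) hx).mono subset_closure

theorem HasFDerivWithinAt.apply_eq_zero_of_curve {g : E → F} {L : E →L[ℝ] F} {s : Set E}
    {x τ : E} {γ : ℝ → E} (hg : HasFDerivWithinAt g L s x) (hg0 : ∀ y ∈ s, g y = 0)
    (hγ0 : γ 0 = x) (hγ : HasDerivAt γ τ 0) (hγs : ∀ᶠ r in 𝓝 0, γ r ∈ s) : L τ = 0 := by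
  obtain ⟨V, hV, hVs⟩ := hγs.exists_mem
  have hcomp : HasDerivAt (g ∘ γ) (L τ) 0 :=
    ((hγ0 ▸ hg).comp_hasDerivWithinAt 0 hγ.hasDerivWithinAt hVs).hasDerivAt hV
  have hzero : HasDerivAt (g ∘ γ) 0 0 :=
    (hasDerivAt_const 0 (0 : F)).congr_of_eventuallyEq
      (by filter_upwards [hγs] with r hr using hg0 _ hr)
  exact hcomp.unique hzero

end NormedSpace

section InnerProductSpace

variable {E : Type*} [NormedAddCommGroup E] [InnerProductSpace ℝ E] [CompleteSpace E]

theorem exists_unit_inner_lt_of_mem_frontier {s : Set E} (hs : IsOpen s) (hconv : Convex ℝ s)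
    {x : E} (hx : x ∈ frontier s) : ∃ w : E, ‖w‖ = 1 ∧ ∀ z ∈ s, ⟪z, w⟫ < ⟪x, w⟫ := by
  obtain ⟨ℓ, hℓ⟩ := geometric_hahn_banach_open_point hconv hs (hs.frontier_eq ▸ hx).2
  set w := (InnerProductSpace.toDual ℝ E).symm ℓ
  have hw : ∀ z, ⟪z, w⟫ = ℓ z := fun z => by
    rw [real_inner_comm, InnerProductSpace.toDual_symm_apply]
  obtain ⟨z₀, hz₀⟩ := closure_nonempty_iff.mp ⟨x, hx.1⟩
  have hw₀ : 0 < ‖w‖ := norm_pos_iff.mpr fun h => by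
    have := hℓ z₀ hz₀
    rw [← hw, ← hw, h, inner_zero_right, inner_zero_right] at this
    exact lt_irrefl _ this
  refine ⟨‖w‖⁻¹ • w, by rw [norm_smul, norm_inv, norm_norm, inv_mul_cancel₀ hw₀.ne'], ?_⟩
  intro z hz
  simp only [real_inner_smul_right, hw]
  exact mul_lt_mul_of_pos_left (hℓ z hz) (inv_pos.mpr hw₀)

theorem ContDiffAt.differentiableAt_gradient {d : E → ℝ} {x : E} (hd : ContDiffAt ℝ 2 d x) :
    DifferentiableAt ℝ (gradient d) x :=
  ((InnerProductSpace.toDual ℝ E).symm.contDiff.contDiffAt.comp x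
    (hd.fderiv_right (m := 1) (by norm_num))).differentiableAt (by norm_num)

theorem inner_fderiv_gradient_self_nonneg_of_isLocalMin {d : E → ℝ} {x τ : E}
    (hd : ContDiffAt ℝ 2 d x) (hmin : IsLocalMin (fun s : ℝ => d (x + s • τ)) 0) :
    0 ≤ ⟪fderiv ℝ (gradient d) x τ, τ⟫ := by
  have hline : ∀ s : ℝ, HasDerivAt (fun s : ℝ => x + s • τ) τ s := fun s => by
    simpa using ((hasDerivAt_id s).smul_const τ).const_add x
  have hnear : ∀ᶠ s in 𝓝 (0 : ℝ), DifferentiableAt ℝ d (x + s • τ) := by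
    have hlim : Tendsto (fun s : ℝ => x + s • τ) (𝓝 0) (𝓝 x) := by
      simpa using (hline 0).continuousAt.tendsto
    exact hlim.eventually ((hd.eventually (by simp)).mono fun y hy => hy.differentiableAt
      (by norm_num))
  have hderiv : deriv (fun s : ℝ => d (x + s • τ)) =ᶠ[𝓝 0]
      fun s => ⟪gradient d (x + s • τ), τ⟫ := by
    filter_upwards [hnear] with s hs
    exact (hs.hasFDerivAt.comp_hasDerivAt s (hline s)).deriv.trans
      InnerProductSpace.toDual_symm_apply.symm
  have hsecond : HasDerivAt (fun s : ℝ => ⟪gradient d (x + s • τ), τ⟫)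
      ⟪fderiv ℝ (gradient d) x τ, τ⟫ 0 := by
    have := (hd.differentiableAt_gradient.hasFDerivAt.comp_hasDerivAt_of_eq (0 : ℝ)
      (hline 0) (by simp)).inner ℝ (hasDerivAt_const (0 : ℝ) τ)
    simpa using this
  rw [← hsecond.deriv, ← hderiv.deriv_eq]
  exact hmin.deriv_deriv_nonneg (ContinuousAt.comp (f := fun s : ℝ => x + s • τ)
    hnear.self_of_nhds.continuousAt (hline 0).continuousAt)

theorem inner_gradient_sqrt_one_add_norm_sq {G : E → E} {A : E →L[ℝ] E} {s : Set E} {x : E}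
    (hG : HasFDerivWithinAt G A s x) (hs : UniqueDiffWithinAt ℝ s x)
    (hdiff : DifferentiableAt ℝ (fun y => √(1 + ‖G y‖ ^ 2)) x) (ν : E) :
    ⟪gradient (fun y => √(1 + ‖G y‖ ^ 2)) x, ν⟫ = ⟪G x, A ν⟫ / √(1 + ‖G x‖ ^ 2) := by
  have h := (hG.norm_sq.const_add 1).sqrt (by positivity)
  rw [gradient, InnerProductSpace.toDual_symm_apply, ← hdiff.fderivWithin hs, h.fderivWithin hs]
  simp only [one_div, mul_inv_rev, smul_apply, ContinuousLinearMap.comp_apply, coe_innerSL_apply,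
    nsmul_eq_mul, Nat.cast_ofNat, smul_eq_mul]
  field_simp

theorem exists_symm_hasFDerivWithinAt_gradient {Ω : Set E} {f : E → ℝ} {x : E}
    (hΩ : IsOpen Ω) (hconv : Convex ℝ Ω) (hf : ContDiffOn ℝ 2 f (closure Ω))
    (hgrad : ContinuousOn (gradient f) (closure Ω)) (hx : x ∈ closure Ω) :
    ∃ A : E →L[ℝ] E, HasFDerivWithinAt (gradient f) A (closure Ω) x ∧
      ∀ h k, ⟪A h, k⟫ = ⟪A k, h⟫ := by
  have hC : UniqueDiffOn ℝ (closure Ω) := hconv.uniqueDiffOn_closure hΩ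
  set g : E → E := fun y => (InnerProductSpace.toDual ℝ E).symm (fderivWithin ℝ f (closure Ω) y)
  have hg : ContDiffOn ℝ 1 g (closure Ω) := (InnerProductSpace.toDual ℝ E).symm.contDiff
    |>.comp_contDiffOn (hf.fderivWithin hC (by norm_num))
  -- on `∂Ω`, `gradient f` is a two-sided gradient; continuity identifies it with `g`
  have hgrad_eq : EqOn (gradient f) g (closure Ω) := by
    refine EqOn.of_subset_closure (fun y hy => ?_) hgrad hg.continuousOn subset_closure subset_rfl
    simp only [g, gradient,
      fderivWithin_of_mem_nhds (mem_of_superset (hΩ.mem_nhds hy) subset_closure)]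
  have hA := (hg.differentiableOn one_ne_zero x hx).congr hgrad_eq (hgrad_eq hx)
    |>.hasFDerivWithinAt
  refine ⟨_, hA, fun h k => ?_⟩
  have hint : Ω ⊆ interior (closure Ω) := interior_maximal subset_closure hΩ
  have hdiff : ∀ y ∈ interior (closure Ω), HasFDerivAt f (innerSL ℝ (gradient f y)) y :=
    fun y hy => (hf.contDiffAt (mem_interior_iff_mem_nhds.mp hy)).differentiableAt
      (by norm_num) |>.hasGradientAt.hasFDerivAt
  exact hconv.closure.second_derivative_within_at_symmetric
    ((closure_nonempty_iff.mp ⟨x, hx⟩).mono hint) hdiff hx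
    ((innerSL ℝ).hasFDerivAt.comp_hasFDerivWithinAt x (hA.mono interior_subset)) h k

end InnerProductSpace

section SignedDistance

variable {Ω : Set (Eucl n)}

theorem sdist_eq_zero_of_mem_frontier (hΩ : IsOpen Ω) {x : Eucl n} (hx : x ∈ frontier Ω) :
    sdist Ω x = 0 := by
  rw [hΩ.frontier_eq] at hx
  rw [sdist, ← infDist_closure, infDist_zero_of_mem hx.1, infDist_zero_of_mem (mem_compl hx.2),
    sub_zero]

theorem sdist_nonneg_of_notMem {y : Eucl n} (hy : y ∉ Ω) : 0 ≤ sdist Ω y := by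
  rw [sdist, infDist_zero_of_mem (mem_compl hy), sub_zero]
  exact infDist_nonneg

theorem mem_frontier_of_sdist_eq_zero (hΩ : IsOpen Ω) (hne : Ω.Nonempty) (hcne : Ωᶜ.Nonempty)
    {y : Eucl n} (hy : sdist Ω y = 0) : y ∈ frontier Ω := by
  rw [sdist, sub_eq_zero] at hy
  have hyΩ : y ∉ Ω := fun h => by
    have hpos := (hΩ.isClosed_compl.notMem_iff_infDist_pos hcne).mp (notMem_compl_iff.mpr h)
    rw [← hy, infDist_zero_of_mem h] at hpos
    exact lt_irrefl _ hpos
  rw [hΩ.frontier_eq]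
  refine ⟨(mem_closure_iff_infDist_zero hne).mpr ?_, hyΩ⟩
  rw [hy, infDist_zero_of_mem (mem_compl hyΩ)]

theorem inner_sub_le_sdist (hne : Ω.Nonempty) {w : Eucl n} {c : ℝ} (hw : ‖w‖ = 1)
    (hΩw : ∀ z ∈ Ω, ⟪z, w⟫ < c) (y : Eucl n) : ⟪y, w⟫ - c ≤ sdist Ω y := by
  by_cases hy : y ∈ Ω
  · set r := c - ⟪y, w⟫
    have hr : 0 < r := sub_pos.mpr (hΩw y hy)
    have hout : y + r • w ∉ Ω := fun h => by
      have := hΩw _ h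
      rw [inner_add_left, real_inner_smul_left, real_inner_self_eq_norm_sq, hw] at this
      simp [r] at this
    have hle : infDist y Ωᶜ ≤ r := by
      calc infDist y Ωᶜ ≤ dist y (y + r • w) := infDist_le_dist_of_mem hout
        _ = r := by rw [dist_self_add_right, norm_smul, hw, mul_one, norm_of_nonneg hr.le]
    rw [sdist, infDist_zero_of_mem hy]
    linarith
  · rw [sdist, infDist_zero_of_mem (mem_compl hy), sub_zero]
    refine (le_infDist hne).mpr fun z hz => ?_
    calc ⟪y, w⟫ - c ≤ ⟪y - z, w⟫ := by rw [inner_sub_left]; linarith [hΩw z hz]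
      _ ≤ ‖y - z‖ * ‖w‖ := real_inner_le_norm _ _
      _ = dist y z := by rw [hw, mul_one, dist_eq_norm]

theorem outNormal_eq_of_mem_frontier (hΩ : IsOpen Ω) {x w : Eucl n} (hx : x ∈ frontier Ω)
    (hw : ‖w‖ = 1) (hΩw : ∀ z ∈ Ω, ⟪z, w⟫ < ⟪x, w⟫) (hd : DifferentiableAt ℝ (sdist Ω) x) :
    outNormal Ω x = w := by
  have hmin : IsLocalMin (fun y => sdist Ω y - ⟪w, y⟫) x := Eventually.of_forall fun y => by
    have := inner_sub_le_sdist (closure_nonempty_iff.mp ⟨x, hx.1⟩) hw hΩw y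
    simp only [sdist_eq_zero_of_mem_frontier hΩ hx]
    linarith [real_inner_comm w x, real_inner_comm w y]
  have hderiv := sub_eq_zero.mp
    (hmin.hasFDerivAt_eq_zero (hd.hasFDerivAt.sub (innerSL ℝ w).hasFDerivAt))
  refine ext_inner_right ℝ fun v => ?_
  rw [outNormal, gradient, InnerProductSpace.toDual_symm_apply, hderiv]
  rfl

theorem exists_curve_mem_frontier (hΩ : IsOpen Ω) {x τ : Eucl n} (hx : x ∈ frontier Ω)
    (hd : ContDiffAt ℝ 1 (sdist Ω) x) (hν : outNormal Ω x ≠ 0) (hτ : ⟪τ, outNormal Ω x⟫ = 0) :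
    ∃ γ : ℝ → Eucl n, γ 0 = x ∧ HasDerivAt γ τ 0 ∧ ∀ᶠ r in 𝓝 0, γ r ∈ frontier Ω := by
  have happly : ∀ v, fderiv ℝ (sdist Ω) x v = ⟪outNormal Ω x, v⟫ := fun v =>
    InnerProductSpace.toDual_symm_apply.symm
  have hsurj : (fderiv ℝ (sdist Ω) x).range = ⊤ := by
    refine LinearMap.range_eq_top.mpr fun r => ⟨(r / ‖outNormal Ω x‖ ^ 2) • outNormal Ω x, ?_⟩
    rw [ContinuousLinearMap.coe_coe, happly, real_inner_smul_right, real_inner_self_eq_norm_sq,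
      div_mul_cancel₀ _ (by positivity)]
  obtain ⟨γ, hγ0, hγ, hγd⟩ := (hd.hasStrictFDerivAt one_ne_zero).exists_curve_mem_fiber hsurj
    (by rw [happly, real_inner_comm, hτ])
  have hne : Ω.Nonempty := closure_nonempty_iff.mp ⟨x, hx.1⟩
  have hcne : Ωᶜ.Nonempty := ⟨x, (hΩ.frontier_eq ▸ hx).2⟩
  refine ⟨γ, hγ0, hγ, hγd.mono fun r hr => mem_frontier_of_sdist_eq_zero hΩ hne hcne ?_⟩
  rw [hr, sdist_eq_zero_of_mem_frontier hΩ hx]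

theorem inner_fderiv_outNormal_self_nonneg (hΩ : IsOpen Ω) (hconv : Convex ℝ Ω) {x τ : Eucl n}
    (hx : x ∈ frontier Ω) (hd : ContDiffAt ℝ 2 (sdist Ω) x) (hτ : ⟪τ, outNormal Ω x⟫ = 0) :
    0 ≤ ⟪fderiv ℝ (outNormal Ω) x τ, τ⟫ := by
  obtain ⟨w, hw, hΩw⟩ := exists_unit_inner_lt_of_mem_frontier hΩ hconv hx
  rw [outNormal_eq_of_mem_frontier hΩ hx hw hΩw (hd.differentiableAt (by norm_num))] at hτ
  refine inner_fderiv_gradient_self_nonneg_of_isLocalMin hd (Eventually.of_forall fun s => ?_)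
  have hout : x + s • τ ∉ Ω := fun h => by
    have := hΩw _ h
    rw [inner_add_left, real_inner_smul_left, hτ, mul_zero, add_zero] at this
    exact lt_irrefl _ this
  show sdist Ω (x + (0 : ℝ) • τ) ≤ sdist Ω (x + s • τ)
  rw [zero_smul, add_zero, sdist_eq_zero_of_mem_frontier hΩ hx]
  exact sdist_nonneg_of_notMem hout

theorem inner_apply_outNormal_nonpos_of_neumann (hΩ : IsOpen Ω) (hconv : Convex ℝ Ω)
    {x : Eucl n} (hx : x ∈ frontier Ω) (hd : ContDiffAt ℝ 2 (sdist Ω) x) {G : Eucl n → Eucl n}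
    {A : Eucl n →L[ℝ] Eucl n} (hG : HasFDerivWithinAt G A (frontier Ω) x)
    (hneumann : ∀ y ∈ frontier Ω, ⟪G y, outNormal Ω y⟫ = 0) :
    ⟪A (G x), outNormal Ω x⟫ ≤ 0 := by
  obtain ⟨w, hw, hΩw⟩ := exists_unit_inner_lt_of_mem_frontier hΩ hconv hx
  have hν : outNormal Ω x ≠ 0 := by
    rw [outNormal_eq_of_mem_frontier hΩ hx hw hΩw (hd.differentiableAt (by norm_num))]
    exact norm_ne_zero_iff.mp (hw ▸ one_ne_zero)
  obtain ⟨γ, hγ0, hγ, hγΩ⟩ :=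
    exists_curve_mem_frontier hΩ hx (hd.of_le (by norm_num)) hν (hneumann x hx)
  have hN := hd.differentiableAt_gradient.hasFDerivAt.hasFDerivWithinAt (s := frontier Ω)
  have htangent := (hG.inner ℝ hN).apply_eq_zero_of_curve hneumann hγ0 hγ hγΩ
  have hconvex := inner_fderiv_outNormal_self_nonneg hΩ hconv hx hd (hneumann x hx)
  simp only [ContinuousLinearMap.comp_apply, ContinuousLinearMap.prod_apply,
    fderivInnerCLM_apply] at htangent
  change ⟪G x, fderiv ℝ (outNormal Ω) x (G x)⟫ + ⟪A (G x), outNormal Ω x⟫ = 0 at htangent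
  linarith [real_inner_comm (G x) (fderiv ℝ (outNormal Ω) x (G x))]

end SignedDistance

theorem boundary_sign_tangential_gradient_general
    (n : ℕ) (T : ℝ)
    (Ω : Set (Eucl n)) (hΩopen : IsOpen Ω)
    (hΩconv : Convex ℝ Ω) (hΩsmooth : SmoothBoundary Ω)
    (f : Eucl n → ℝ → ℝ → Eucl (n + 1)) (u₀ : Eucl n → ℝ) (u : Eucl n → ℝ → ℝ)
    (hsol : IsMCFSolution Ω f u₀ u T)
    (hu : ∀ t ∈ Ioo (0 : ℝ) T, ContDiffOn ℝ 2 (fun y => u y t) (closure Ω)) :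
    ∀ t ∈ Ioo (0 : ℝ) T, ∀ x ∈ frontier Ω,
      ⟪gradient (fun y => vel u y t) x, outNormal Ω x⟫
          - ⟪gradient (fun y => vel u y t) x, sgrad u x t⟫
              * ⟪sgrad u x t, outNormal Ω x⟫ / (vel u x t) ^ 2 ≤ 0 ∧
      ⟪gradient (fun y => vel u y t) x, outNormal Ω x⟫ ≤ 0 := by
  intro t ht x hx
  obtain ⟨U, hU, hfrontierU, hsdist⟩ := hΩsmooth
  have hd : ContDiffAt ℝ 2 (sdist Ω) x :=
    (hsdist.contDiffAt (hU.mem_nhds (hfrontierU hx))).of_le (WithTop.coe_le_coe.mpr le_top)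
  obtain ⟨A, hA, hAsymm⟩ := exists_symm_hasFDerivWithinAt_gradient hΩopen hΩconv (hu t ht)
    (hsol.grad_cont t ht) hx.1
  have hAν : ⟪A (sgrad u x t), outNormal Ω x⟫ ≤ 0 := inner_apply_outNormal_nonpos_of_neumann
    hΩopen hΩconv hx hd (hA.mono frontier_subset_closure) (hsol.neumann t ht)
  have hdv : ⟪gradient (fun y => vel u y t) x, outNormal Ω x⟫ ≤ 0 := by
    by_cases hdiff : DifferentiableAt ℝ (fun y => vel u y t) x
    · have hv := inner_gradient_sqrt_one_add_norm_sq hA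
        (hΩconv.uniqueDiffOn_closure hΩopen x hx.1) hdiff (outNormal Ω x)
      rw [real_inner_comm (A _), hAsymm] at hv
      exact hv.le.trans (div_nonpos_of_nonpos_of_nonneg hAν (sqrt_nonneg _))
    · rw [gradient_eq_zero_of_not_differentiableAt hdiff, inner_zero_left]
  rw [hsol.neumann t ht x hx, mul_zero, zero_div, sub_zero]
  exact ⟨hdv, hdv⟩

/-- for convex `Ω`, `D_{Γ_t}v · ν⃗ ≤ 0` on `∂Ω`;
equivalently (using the Neumann condition) `dv·ν ≤ 0` on `∂Ω`. -/
theorem boundary_sign_tangential_gradient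
    (n : ℕ) (T : ℝ) (hT : 0 < T)
    (Ω : Set (Eucl n)) (hΩopen : IsOpen Ω) (hΩbdd : Bornology.IsBounded Ω)
    (hΩconv : Convex ℝ Ω) (hΩsmooth : SmoothBoundary Ω)
    (f : Eucl n → ℝ → ℝ → Eucl (n + 1)) (u₀ : Eucl n → ℝ) (u : Eucl n → ℝ → ℝ)
    (hsol : IsMCFSolution Ω f u₀ u T)
    -- `v` is `C¹` up to the boundary
    (hv : ∀ t ∈ Ioo (0 : ℝ) T, ContDiffOn ℝ 1 (fun y => vel u y t) (closure Ω))
    (hu : ∀ t ∈ Ioo (0 : ℝ) T, ContDiffOn ℝ 2 (fun y => u y t) (closure Ω)) :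
    ∀ t ∈ Ioo (0 : ℝ) T, ∀ x ∈ frontier Ω,
      ⟪gradient (fun y => vel u y t) x, outNormal Ω x⟫
          - ⟪gradient (fun y => vel u y t) x, sgrad u x t⟫
              * ⟪sgrad u x t, outNormal Ω x⟫ / (vel u x t) ^ 2 ≤ 0 ∧
      ⟪gradient (fun y => vel u y t) x, outNormal Ω x⟫ ≤ 0 :=
  boundary_sign_tangential_gradient_general n T Ω hΩopen hΩconv hΩsmooth f u₀ u hsol hu

end
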